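/- arXiv:2204.02503 — 2 statements merged into one kernel-verified Lean document; each statement's English description precedes it below -/
import Mathlib

section
/- Let k ≥ 2 and let S be a non-trivial simplicial k-circuit with graph G = G(S). Then: (a) G is (k+1)-connected; and (b) if X is a set of k+1 vertices whose removal disconnects G, then X induces a clique in G, X is not a simplex of S, and there exist simplicial k-circuits S′ and S″ such that S′ ∩ S″ = {X} and S = S′ △ S″, where △ denotes symmetric difference. -/
/-! ### Simplicial multicomplexes over the vertex type ℕ -/

/-- The vertex set of a simplicial multicomplex: the union of its simplices. -/
def vertexSet (S : Multiset (Finset ℕ)) : Finset ℕ := S.toFinset.sup id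

lemma mem_vertexSet_of_mem {S : Multiset (Finset ℕ)} {U : Finset ℕ} {x : ℕ}
    (hU : U ∈ S) (hx : x ∈ U) : x ∈ vertexSet S :=
  Finset.mem_of_subset (Finset.le_sup (f := id) (Multiset.mem_toFinset.2 hU)) hx

/-- The number of simplices of `S` containing `F`, counted with multiplicity. -/
def simplexCount (S : Multiset (Finset ℕ)) (F : Finset ℕ) : ℕ :=
  Multiset.countP (fun U => F ⊆ U) S

/-- `S` is a simplicial `k`-multicomplex: all its members are `(k+1)`-element sets. -/
def IsMultiComplex (k : ℕ) (S : Multiset (Finset ℕ)) : Prop :=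
  ∀ U ∈ S, U.card = k + 1

/-- The boundary of `S`: all `k`-element sets lying in an odd number of simplices of `S`,
counted with multiplicity. -/
def boundarySet (k : ℕ) (S : Multiset (Finset ℕ)) : Set (Finset ℕ) :=
  {F | F.card = k ∧ Odd (simplexCount S F)}

/-- A simplicial `k`-cycle: a simplicial `k`-multicomplex with empty boundary. -/
def IsSimpCycle (k : ℕ) (S : Multiset (Finset ℕ)) : Prop :=
  IsMultiComplex k S ∧ ∀ F : Finset ℕ, F.card = k → Even (simplexCount S F)

/-- A simplicial `k`-circuit: a nonempty simplicial `k`-cycle, no proper nonempty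
sub-multiset of which is a simplicial `k`-cycle. -/
def IsSimpCircuit (k : ℕ) (S : Multiset (Finset ℕ)) : Prop :=
  IsSimpCycle k S ∧ S ≠ 0 ∧
    ∀ T : Multiset (Finset ℕ), T ≤ S → T ≠ 0 → T ≠ S → ¬ IsSimpCycle k T

/-- A trivial simplicial circuit consists of two copies of a single simplex. -/
def IsTrivialSimpCircuit (S : Multiset (Finset ℕ)) : Prop :=
  ∃ U : Finset ℕ, S = {U, U}

/-- Symmetric difference of multisets (for multisets with no repeated members this is the
usual symmetric difference of sets). -/
def symmDiffM (S T : Multiset (Finset ℕ)) : Multiset (Finset ℕ) := (S - T) + (T - S)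

/-- Contraction of the vertex `v` onto the vertex `u`: delete every simplex containing both
`u` and `v`, and replace every simplex `U` containing `v` but not `u` by `(U∖{v})∪{u}`. -/
def contractS (S : Multiset (Finset ℕ)) (u v : ℕ) : Multiset (Finset ℕ) :=
  (S.filter fun U => ¬ (u ∈ U ∧ v ∈ U)).map fun U =>
    if v ∈ U then insert u (U.erase v) else U

/-- The link of an edge `uv` of `S`. -/
def linkS (S : Multiset (Finset ℕ)) (u v : ℕ) : Multiset (Finset ℕ) :=
  (S.filter fun U => u ∈ U ∧ v ∈ U).map fun U => U \ {u, v}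

/-- `S` is strongly connected: any two simplices are joined by a sequence of simplices of `S`
in which consecutive simplices share at least `k` vertices. -/
def StronglyConnectedS (k : ℕ) (S : Multiset (Finset ℕ)) : Prop :=
  ∀ U ∈ S, ∀ W ∈ S,
    Relation.ReflTransGen (fun A B => A ∈ S ∧ B ∈ S ∧ k ≤ (A ∩ B).card) U W

/-- A `k`-pseudomanifold: a nonempty strongly connected simplicial `k`-complex in which every
`k`-element subset of a simplex is contained in exactly two simplices. -/
def IsPseudomanifold (k : ℕ) (S : Multiset (Finset ℕ)) : Prop :=
  S.Nodup ∧ IsMultiComplex k S ∧ S ≠ 0 ∧ StronglyConnectedS k S ∧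
    ∀ F : Finset ℕ, F.card = k → (∃ U ∈ S, F ⊆ U) → simplexCount S F = 2

/-- Stacked `k`-spheres: obtained from the boundary of a `(k+1)`-simplex by repeated
barycentric subdivisions of facets. -/
inductive IsStackedSphere : ℕ → Multiset (Finset ℕ) → Prop
  | base (k : ℕ) (W : Finset ℕ) (hW : W.card = k + 2) :
      IsStackedSphere k (W.powersetCard (k + 1)).val
  | subdiv (k : ℕ) (S : Multiset (Finset ℕ)) (U : Finset ℕ) (w : ℕ)
      (hS : IsStackedSphere k S) (hU : U ∈ S) (hw : w ∉ vertexSet S) :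
      IsStackedSphere k (symmDiffM S ((insert w U).powersetCard (k + 1)).val)

/-- `S` is a copy of the simplicial `k`-circuit `ℒ_k`. -/
def IsCopyOfL (k : ℕ) (S : Multiset (Finset ℕ)) : Prop :=
  ∃ (U : Finset ℕ) (x y : ℕ), U.card = k + 1 ∧ x ∉ U ∧ y ∉ U ∧ x ≠ y ∧
    vertexSet S = U ∪ {x, y} ∧
    S = ((U.image fun w => insert x (U.erase w)) ∪ (U.image fun w => insert y (U.erase w))).val

open scoped Classical in
/-- The family `S†`: all `(k+1)`-element subsets `K` of `V(S)` containing `u` and `v` such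
that both `K∖{u}` and `K∖{v}` are contained in some simplex of `S`. -/
noncomputable def faceDag (k : ℕ) (S : Multiset (Finset ℕ)) (u v : ℕ) : Multiset (Finset ℕ) :=
  ((vertexSet S).powersetCard (k + 1)).val.filter fun K =>
    u ∈ K ∧ v ∈ K ∧ (∃ U ∈ S, K.erase u ⊆ U) ∧ (∃ U ∈ S, K.erase v ⊆ U)

open scoped Classical in
/-- The family `S*`: the members `K` of `S†` with `K∖{u}` and `K∖{v}` in the boundary of `S`. -/
noncomputable def faceStar (k : ℕ) (S : Multiset (Finset ℕ)) (u v : ℕ) : Multiset (Finset ℕ) :=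
  (faceDag k S u v).filter fun K =>
    K.erase u ∈ boundarySet k S ∧ K.erase v ∈ boundarySet k S

/-! ### Finite graphs with vertices in ℕ -/

/-- A finite simple graph with vertex set a finite subset of `ℕ`. -/
structure FinGraph : Type where
  verts : Finset ℕ
  Adj : ℕ → ℕ → Prop
  symm : ∀ ⦃x y⦄, Adj x y → Adj y x
  loopless : ∀ x, ¬ Adj x x
  adj_mem : ∀ ⦃x y⦄, Adj x y → x ∈ verts ∧ y ∈ verts

namespace FinGraph

/-- The number of edges of `G`. -/
noncomputable def edgeCount (G : FinGraph) : ℕ := (Sym2.fromRel (r := G.Adj) ⟨fun _ _ h => G.symm h⟩).ncard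

/-- `G` is connected. -/
def Connected (G : FinGraph) : Prop :=
  G.verts.Nonempty ∧ ∀ x ∈ G.verts, ∀ y ∈ G.verts, Relation.ReflTransGen G.Adj x y

/-- Deletion of a set of vertices. -/
def deleteVerts (G : FinGraph) (K : Finset ℕ) : FinGraph where
  verts := G.verts \ K
  Adj x y := G.Adj x y ∧ x ∉ K ∧ y ∉ K
  symm := by
    rintro x y ⟨h, hx, hy⟩
    exact ⟨G.symm h, hy, hx⟩
  loopless := by
    rintro x ⟨h, -, -⟩
    exact G.loopless x h
  adj_mem := by
    rintro x y ⟨h, hx, hy⟩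
    exact ⟨Finset.mem_sdiff.2 ⟨(G.adj_mem h).1, hx⟩, Finset.mem_sdiff.2 ⟨(G.adj_mem h).2, hy⟩⟩

/-- `G` is `m`-connected: it has at least `m+1` vertices and deleting any set of fewer than
`m` vertices leaves a connected graph. -/
def ConnectedGE (m : ℕ) (G : FinGraph) : Prop :=
  m + 1 ≤ G.verts.card ∧ ∀ K : Finset ℕ, K.card < m → (G.deleteVerts K).Connected

/-- `G` is a complete graph on `n` vertices. -/
def IsCompleteOn (G : FinGraph) (n : ℕ) : Prop :=
  G.verts.card = n ∧ ∀ x ∈ G.verts, ∀ y ∈ G.verts, x ≠ y → G.Adj x y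

/-- `H` is a subgraph of `G`. -/
def IsSubgraph (H G : FinGraph) : Prop :=
  H.verts ⊆ G.verts ∧ ∀ ⦃x y⦄, H.Adj x y → G.Adj x y

/-- `X` is a clique of `G`. -/
def IsClique (G : FinGraph) (X : Finset ℕ) : Prop :=
  X ⊆ G.verts ∧ ∀ x ∈ X, ∀ y ∈ X, x ≠ y → G.Adj x y

/-- The union of two graphs. -/
def union (G H : FinGraph) : FinGraph where
  verts := G.verts ∪ H.verts
  Adj x y := G.Adj x y ∨ H.Adj x y
  symm := by
    rintro x y (h | h)
    exacts [Or.inl (G.symm h), Or.inr (H.symm h)]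
  loopless := by
    rintro x (h | h)
    exacts [G.loopless x h, H.loopless x h]
  adj_mem := by
    rintro x y (h | h)
    · exact ⟨Finset.mem_union_left _ (G.adj_mem h).1, Finset.mem_union_left _ (G.adj_mem h).2⟩
    · exact ⟨Finset.mem_union_right _ (H.adj_mem h).1, Finset.mem_union_right _ (H.adj_mem h).2⟩

/-- Adding the edge `uv` to `G` (for vertices `u ≠ v` of `G`). -/
def addEdge (G : FinGraph) (u v : ℕ) : FinGraph where
  verts := G.verts
  Adj x y := G.Adj x y ∨
    (x ≠ y ∧ x ∈ G.verts ∧ y ∈ G.verts ∧ ((x = u ∧ y = v) ∨ (x = v ∧ y = u)))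
  symm := by
    rintro x y (h | ⟨hxy, hx, hy, h | h⟩)
    · exact Or.inl (G.symm h)
    · exact Or.inr ⟨hxy.symm, hy, hx, Or.inr ⟨h.2, h.1⟩⟩
    · exact Or.inr ⟨hxy.symm, hy, hx, Or.inl ⟨h.2, h.1⟩⟩
  loopless := by
    rintro x (h | ⟨hxx, -⟩)
    · exact G.loopless x h
    · exact hxx rfl
  adj_mem := by
    rintro x y (h | ⟨-, hx, hy, -⟩)
    · exact G.adj_mem h
    · exact ⟨hx, hy⟩

/-- Adding a set `B` of unordered pairs of vertices to `G` as edges. -/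
def addEdges (G : FinGraph) (B : Finset (Sym2 ℕ)) : FinGraph where
  verts := G.verts
  Adj x y := G.Adj x y ∨ (x ≠ y ∧ x ∈ G.verts ∧ y ∈ G.verts ∧ s(x, y) ∈ B)
  symm := by
    rintro x y (h | ⟨hxy, hx, hy, hB⟩)
    · exact Or.inl (G.symm h)
    · exact Or.inr ⟨hxy.symm, hy, hx, by rwa [Sym2.eq_swap]⟩
  loopless := by
    rintro x (h | ⟨hxx, -⟩)
    · exact G.loopless x h
    · exact hxx rfl
  adj_mem := by
    rintro x y (h | ⟨-, hx, hy, -⟩)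
    · exact G.adj_mem h
    · exact ⟨hx, hy⟩

/-- Deleting the edge `uv` from `G`. -/
def deleteEdge (G : FinGraph) (u v : ℕ) : FinGraph where
  verts := G.verts
  Adj x y := G.Adj x y ∧ ¬ ((x = u ∧ y = v) ∨ (x = v ∧ y = u))
  symm := by
    rintro x y ⟨h, hne⟩
    refine ⟨G.symm h, fun hc => hne ?_⟩
    rcases hc with ⟨h1, h2⟩ | ⟨h1, h2⟩
    · exact Or.inr ⟨h2, h1⟩
    · exact Or.inl ⟨h2, h1⟩
  loopless := by
    rintro x ⟨h, -⟩
    exact G.loopless x h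
  adj_mem := by
    rintro x y ⟨h, -⟩
    exact G.adj_mem h

/-- The contraction `G/uv`: delete `v` and join `u` to every former neighbour of `v`
other than `u`. -/
def contract (G : FinGraph) (u v : ℕ) : FinGraph where
  verts := G.verts.erase v
  Adj x y := x ≠ y ∧ x ∈ G.verts ∧ y ∈ G.verts ∧ x ≠ v ∧ y ≠ v ∧
    (G.Adj x y ∨ (x = u ∧ G.Adj v y) ∨ (y = u ∧ G.Adj v x))
  symm := by
    rintro x y ⟨hxy, hx, hy, hxv, hyv, h⟩
    refine ⟨hxy.symm, hy, hx, hyv, hxv, ?_⟩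
    rcases h with h | h | h
    · exact Or.inl (G.symm h)
    · exact Or.inr (Or.inr h)
    · exact Or.inr (Or.inl h)
  loopless := by
    rintro x ⟨hxx, -⟩
    exact hxx rfl
  adj_mem := by
    rintro x y ⟨hxy, hx, hy, hxv, hyv, -⟩
    exact ⟨Finset.mem_erase.2 ⟨hxv, hx⟩, Finset.mem_erase.2 ⟨hyv, hy⟩⟩

/-! ### Rigidity notions -/

/-- A realisation of `G` in `ℝ^d` is generic if the coordinates of the positions of the
vertices of `G` are algebraically independent over `ℚ`. -/
def IsGeneric (d : ℕ) (G : FinGraph) (p : ℕ → EuclideanSpace ℝ (Fin d)) : Prop :=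
  AlgebraicIndependent ℚ fun vi : {x // x ∈ G.verts} × Fin d => p vi.1.1 vi.2

/-- `q` is an infinitesimal motion of `(G, p)`. -/
def IsInfMotion (d : ℕ) (G : FinGraph) (p q : ℕ → EuclideanSpace ℝ (Fin d)) : Prop :=
  ∀ ⦃x y⦄, G.Adj x y → inner ℝ (q x - q y) (p x - p y) = (0 : ℝ)

/-- `q` is a trivial motion of `(G, p)`: it agrees on the vertices of `G` with a map of the
form `v ↦ A (p v) + b` with `A` skew-symmetric. -/
def IsTrivialMotion (d : ℕ) (G : FinGraph) (p q : ℕ → EuclideanSpace ℝ (Fin d)) : Prop :=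
  ∃ (A : EuclideanSpace ℝ (Fin d) →ₗ[ℝ] EuclideanSpace ℝ (Fin d))
    (b : EuclideanSpace ℝ (Fin d)),
      (∀ x y : EuclideanSpace ℝ (Fin d), (inner ℝ (A x) y : ℝ) = -(inner ℝ x (A y) : ℝ)) ∧
        ∀ v ∈ G.verts, q v = A (p v) + b

/-- `(G, p)` is infinitesimally rigid. -/
def IsInfRigid (d : ℕ) (G : FinGraph) (p : ℕ → EuclideanSpace ℝ (Fin d)) : Prop :=
  ∀ q : ℕ → EuclideanSpace ℝ (Fin d), IsInfMotion d G p q → IsTrivialMotion d G p q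

/-- `G` is rigid in `ℝ^d`: every generic realisation is infinitesimally rigid. -/
def IsRigid (d : ℕ) (G : FinGraph) : Prop :=
  ∀ p : ℕ → EuclideanSpace ℝ (Fin d), G.IsGeneric d p → G.IsInfRigid d p

/-- Two realisations are equivalent if corresponding edges have equal lengths. -/
def Equivalent (d : ℕ) (G : FinGraph) (p q : ℕ → EuclideanSpace ℝ (Fin d)) : Prop :=
  ∀ ⦃x y⦄, G.Adj x y → ‖p x - p y‖ = ‖q x - q y‖

/-- Two realisations are congruent if all pairs of vertices are at equal distances. -/
def Congruent (d : ℕ) (G : FinGraph) (p q : ℕ → EuclideanSpace ℝ (Fin d)) : Prop :=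
  ∀ x ∈ G.verts, ∀ y ∈ G.verts, ‖p x - p y‖ = ‖q x - q y‖

/-- `G` is globally rigid in `ℝ^d`. -/
def IsGloballyRigid (d : ℕ) (G : FinGraph) : Prop :=
  ∀ p q : ℕ → EuclideanSpace ℝ (Fin d),
    G.IsGeneric d p → G.Equivalent d p q → G.Congruent d p q

/-- `G` is `uv`-coincident rigid in `ℝ^d`: some realisation with `p u = p v` is
infinitesimally rigid. -/
def IsCoincidentRigid (d : ℕ) (G : FinGraph) (u v : ℕ) : Prop :=
  ∃ p : ℕ → EuclideanSpace ℝ (Fin d), p u = p v ∧ G.IsInfRigid d p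

end FinGraph

/-- The graph `G(S)` of a simplicial multicomplex `S`. -/
def graphOf (S : Multiset (Finset ℕ)) : FinGraph where
  verts := vertexSet S
  Adj x y := x ≠ y ∧ ∃ U ∈ S, x ∈ U ∧ y ∈ U
  symm := by
    rintro x y ⟨hxy, U, hU, hx, hy⟩
    exact ⟨hxy.symm, U, hU, hy, hx⟩
  loopless := by
    rintro x ⟨hxx, -⟩
    exact hxx rfl
  adj_mem := by
    rintro x y ⟨hxy, U, hU, hx, hy⟩
    exact ⟨mem_vertexSet_of_mem hU hx, mem_vertexSet_of_mem hU hy⟩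

/-! ### Cleavage properties -/

/-- The `d`-cleavage property: `G` is `d`-connected and every `d`-element vertex set whose
removal disconnects `G` induces a clique of `G`. -/
def HasCleavage (d : ℕ) (G : FinGraph) : Prop :=
  G.ConnectedGE d ∧ ∀ X : Finset ℕ, X ⊆ G.verts → X.card = d →
    ¬ (G.deleteVerts X).Connected → G.IsClique X

/-- A `(d+1)`-block of `G`: a subgraph that is a complete graph on `d+1` vertices or is
`(d+1)`-connected, and is maximal among subgraphs of `G` with this property. -/
def IsBlock (d : ℕ) (G D : FinGraph) : Prop :=
  D.IsSubgraph G ∧ (D.IsCompleteOn (d + 1) ∨ D.ConnectedGE (d + 1)) ∧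
    ∀ D' : FinGraph, D'.IsSubgraph G → (D'.IsCompleteOn (d + 1) ∨ D'.ConnectedGE (d + 1)) →
      D.IsSubgraph D' → D' = D

/-- The strong `d`-cleavage property (for `d ≥ 4`): the `d`-cleavage property, and every
`(d+1)`-block is globally rigid in `ℝ^d`. -/
def HasStrongCleavage (d : ℕ) (G : FinGraph) : Prop :=
  HasCleavage d G ∧ ∀ D : FinGraph, IsBlock d G D → D.IsGloballyRigid d

/-!
If deleting a vertex set `K` disconnects `G(S)`, the simplices meeting one component of
`G(S) - K` form a part `A` of `S = A + B` such that the boundaries of `A` and `B` consist of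
faces inside `K`. Every `(k-1)`-set lies in an even number of boundary faces (`∂∂ = 0` mod 2),
so a boundary confined to at most `k` vertices is empty and `A` would be a proper subcycle of
the circuit `S`: hence `G(S)` is `(k+1)`-connected. If `|K| = k + 1`, the same count shows that
`∂A` is either empty or all of `∂K`; minimality of `S` rules out the first case, so `A + K` and
`B + K` are cycles, in fact circuits, with symmetric difference `S`. Each facet `K ∖ z` then lies
in a simplex of `A`, which for `k ≥ 2` makes `K` a clique.
-/

lemma Finset.exists_mem_eq_erase_of_card_add_one {α : Type*} [DecidableEq α] {s t : Finset α}
    (hst : s ⊆ t) (hcard : s.card + 1 = t.card) : ∃ a ∈ t, s = t.erase a := by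
  obtain ⟨a, ha, rfl⟩ := (Finset.covBy_iff_card_sdiff_eq_one.2
    ⟨hst, by rw [Finset.card_sdiff_of_subset hst]; omega⟩).exists_finset_erase
  exact ⟨a, ha, rfl⟩

lemma IsMultiComplex.of_le {k : ℕ} {S T : Multiset (Finset ℕ)} (hS : IsMultiComplex k S)
    (hTS : T ≤ S) : IsMultiComplex k T :=
  fun U hU => hS U (Multiset.mem_of_le hTS hU)

@[simp] lemma simplexCount_zero (F : Finset ℕ) : simplexCount 0 F = 0 := rfl

@[simp] lemma simplexCount_add (S T : Multiset (Finset ℕ)) (F : Finset ℕ) :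
    simplexCount (S + T) F = simplexCount S F + simplexCount T F :=
  Multiset.countP_add _ _ _

@[simp] lemma simplexCount_cons (U : Finset ℕ) (S : Multiset (Finset ℕ)) (F : Finset ℕ) :
    simplexCount (U ::ₘ S) F = simplexCount S F + if F ⊆ U then 1 else 0 :=
  Multiset.countP_cons _ _ _

lemma exists_mem_superset_of_odd_simplexCount {S : Multiset (Finset ℕ)} {F : Finset ℕ}
    (h : Odd (simplexCount S F)) : ∃ U ∈ S, F ⊆ U :=
  Multiset.countP_pos.1 h.pos

lemma even_card_powersetCard_filter_superset {k : ℕ} {U E : Finset ℕ} (hU : U.card = k + 1)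
    (hE : E.card + 1 = k) : Even ((U.powersetCard k).filter (E ⊆ ·)).card := by
  by_cases hEU : E ⊆ U
  · have hfaces : (U.powersetCard k).filter (E ⊆ ·) = (U \ E).image U.erase := by
      ext F
      simp only [Finset.mem_filter, Finset.mem_powersetCard, Finset.mem_image, Finset.mem_sdiff]
      constructor
      · rintro ⟨⟨hFU, hF⟩, hEF⟩
        obtain ⟨z, hz, rfl⟩ := Finset.exists_mem_eq_erase_of_card_add_one hFU (by omega)
        exact ⟨z, ⟨hz, fun hzE => Finset.notMem_erase z U (hEF hzE)⟩, rfl⟩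
      · rintro ⟨z, ⟨hz, hzE⟩, rfl⟩
        refine ⟨⟨Finset.erase_subset z U, by rw [Finset.card_erase_of_mem hz, hU]; rfl⟩, ?_⟩
        exact fun x hx => Finset.mem_erase.2 ⟨fun h => hzE (h ▸ hx), hEU hx⟩
    rw [hfaces, Finset.card_image_of_injOn (U.erase_injOn.mono Finset.sdiff_subset),
      Finset.card_sdiff_of_subset hEU]
    exact ⟨1, by omega⟩
  · rw [Finset.filter_false_of_mem fun F hF hEF =>
      hEU (hEF.trans (Finset.mem_powersetCard.1 hF).1)]
    exact ⟨0, rfl⟩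

lemma even_sum_simplexCount_superset {k : ℕ} {T : Multiset (Finset ℕ)} (hT : IsMultiComplex k T)
    {Ω : Finset ℕ} (hΩ : ∀ U ∈ T, U ⊆ Ω) {E : Finset ℕ} (hE : E.card + 1 = k) :
    Even (∑ F ∈ (Ω.powersetCard k).filter (E ⊆ ·), simplexCount T F) := by
  induction T using Multiset.induction_on with
  | empty => simp
  | cons U T ih =>
    have hU := Multiset.mem_cons_self U T
    simp only [simplexCount_cons, Finset.sum_add_distrib, Finset.sum_boole, Nat.cast_id,
      Finset.filter_filter]
    have hfaces : (Ω.powersetCard k).filter (fun F => E ⊆ F ∧ F ⊆ U) =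
        (U.powersetCard k).filter (E ⊆ ·) := by
      ext F
      simp only [Finset.mem_filter, Finset.mem_powersetCard]
      exact ⟨fun ⟨⟨_, hF⟩, hEF, hFU⟩ => ⟨⟨hFU, hF⟩, hEF⟩,
        fun ⟨⟨hFU, hF⟩, hEF⟩ => ⟨⟨hFU.trans (hΩ U hU), hF⟩, hEF, hFU⟩⟩
    rw [hfaces]
    exact (ih (hT.of_le (Multiset.le_cons_self T U))
      fun V hV => hΩ V (Multiset.mem_cons_of_mem hV)).add
      (even_card_powersetCard_filter_superset (hT U hU) hE)

/-- `∂∂ = 0` modulo 2: every `(k-1)`-set lies in an even number of boundary faces. -/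
lemma even_card_of_forall_mem_iff_mem_boundarySet {k : ℕ} {T : Multiset (Finset ℕ)}
    (hT : IsMultiComplex k T) {E : Finset ℕ} (hE : E.card + 1 = k) {𝓕 : Finset (Finset ℕ)}
    (h𝓕 : ∀ F, F ∈ 𝓕 ↔ F ∈ boundarySet k T ∧ E ⊆ F) : Even 𝓕.card := by
  have hsum := even_sum_simplexCount_superset hT (fun U hU _ hx => mem_vertexSet_of_mem hU hx) hE
  rw [Finset.even_sum_iff_even_card_odd] at hsum
  convert hsum using 2
  ext F
  simp only [h𝓕, boundarySet, Set.mem_ofPred_eq, Finset.mem_filter, Finset.mem_powersetCard]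
  constructor
  · rintro ⟨⟨hF, hodd⟩, hEF⟩
    obtain ⟨U, hU, hFU⟩ := exists_mem_superset_of_odd_simplexCount hodd
    exact ⟨⟨⟨fun x hx => mem_vertexSet_of_mem hU (hFU hx), hF⟩, hEF⟩, hodd⟩
  · rintro ⟨⟨⟨-, hF⟩, hEF⟩, hodd⟩
    exact ⟨⟨hF, hodd⟩, hEF⟩

lemma isSimpCycle_of_boundarySet_subset_of_card_le {k : ℕ} (hk : 1 ≤ k)
    {T : Multiset (Finset ℕ)} (hT : IsMultiComplex k T) {K : Finset ℕ} (hK : K.card ≤ k)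
    (hbd : ∀ F ∈ boundarySet k T, F ⊆ K) : IsSimpCycle k T := by
  refine ⟨hT, fun F hF => Nat.not_odd_iff_even.1 fun hodd => ?_⟩
  have hFK : F = K := Finset.eq_of_subset_of_card_le (hbd F ⟨hF, hodd⟩) (by omega)
  obtain ⟨x, hx⟩ : F.Nonempty := Finset.card_pos.1 (by omega)
  have hsingle := even_card_of_forall_mem_iff_mem_boundarySet hT (E := F.erase x)
    (by rw [Finset.card_erase_of_mem hx]; omega) (𝓕 := {F}) fun G => by
      rw [Finset.mem_singleton]
      refine ⟨?_, fun ⟨hG, _⟩ => ?_⟩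
      · rintro rfl
        exact ⟨⟨hF, hodd⟩, Finset.erase_subset x G⟩
      exact hFK ▸ Finset.eq_of_subset_of_card_le (hbd G hG) (by rw [hG.1]; omega)
  simp at hsingle

lemma mem_boundarySet_erase_iff {k : ℕ} {T : Multiset (Finset ℕ)} (hT : IsMultiComplex k T)
    {X : Finset ℕ} (hX : X.card = k + 1) (hbd : ∀ F ∈ boundarySet k T, F ⊆ X) {x y : ℕ}
    (hx : x ∈ X) (hy : y ∈ X) :
    X.erase x ∈ boundarySet k T ↔ X.erase y ∈ boundarySet k T := by
  classical
  rcases eq_or_ne x y with rfl | hxy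
  · rfl
  have hyx : y ∈ X.erase x := Finset.mem_erase.2 ⟨hxy.symm, hy⟩
  have hX2 : 2 ≤ X.card := Finset.one_lt_card.2 ⟨x, hx, y, hy, hxy⟩
  have hpair := even_card_of_forall_mem_iff_mem_boundarySet hT (E := (X.erase x).erase y)
    (by rw [Finset.card_erase_of_mem hyx, Finset.card_erase_of_mem hx]; omega)
    (𝓕 := ({X.erase x, X.erase y} : Finset _).filter (· ∈ boundarySet k T)) fun F => by
      simp only [Finset.mem_filter, Finset.mem_insert, Finset.mem_singleton]
      constructor
      · rintro ⟨rfl | rfl, hF⟩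
        · exact ⟨hF, Finset.erase_subset y _⟩
        · exact ⟨hF, by rw [Finset.erase_right_comm]; exact Finset.erase_subset x _⟩
      · rintro ⟨hF, hEF⟩
        obtain ⟨z, hz, rfl⟩ :=
          Finset.exists_mem_eq_erase_of_card_add_one (hbd F hF) (by rw [hF.1, hX])
        have hzxy : z = x ∨ z = y := by
          by_contra! hzxy
          exact Finset.notMem_erase z X
            (hEF (Finset.mem_erase.2 ⟨hzxy.2, Finset.mem_erase.2 ⟨hzxy.1, hz⟩⟩))
        rcases hzxy with rfl | rfl
        exacts [⟨Or.inl rfl, hF⟩, ⟨Or.inr rfl, hF⟩]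
  have hne : X.erase x ≠ X.erase y := fun h => Finset.notMem_erase y X (h ▸ hyx)
  rw [Finset.filter_insert, Finset.filter_singleton] at hpair
  by_cases hbx : X.erase x ∈ boundarySet k T <;> by_cases hby : X.erase y ∈ boundarySet k T <;>
    simp_all

/-- A chain whose boundary lies on a `k`-simplex `X` has as boundary either nothing or all of
`∂X`. -/
lemma isSimpCycle_or_isSimpCycle_cons {k : ℕ} {T : Multiset (Finset ℕ)}
    (hT : IsMultiComplex k T) {X : Finset ℕ} (hX : X.card = k + 1)
    (hbd : ∀ F ∈ boundarySet k T, F ⊆ X) :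
    IsSimpCycle k T ∨ IsSimpCycle k (X ::ₘ T) := by
  have face_of_subset : ∀ F : Finset ℕ, F.card = k → F ⊆ X → ∃ z ∈ X, F = X.erase z :=
    fun F hF hFX => Finset.exists_mem_eq_erase_of_card_add_one hFX (by omega)
  by_cases hface : ∃ z ∈ X, X.erase z ∈ boundarySet k T
  · obtain ⟨z, hz, hzbd⟩ := hface
    right
    refine ⟨Multiset.forall_mem_cons.2 ⟨hX, hT⟩, fun F hF => ?_⟩
    rw [simplexCount_cons]
    split_ifs with hFX
    · obtain ⟨y, hy, rfl⟩ := face_of_subset F hF hFX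
      exact ((mem_boundarySet_erase_iff hT hX hbd hz hy).1 hzbd).2.add_one
    · exact Nat.not_odd_iff_even.1 fun hodd => hFX (hbd F ⟨hF, hodd⟩)
  · push Not at hface
    refine Or.inl ⟨hT, fun F hF => Nat.not_odd_iff_even.1 fun hodd => ?_⟩
    obtain ⟨z, hz, rfl⟩ := face_of_subset F hF (hbd F ⟨hF, hodd⟩)
    exact hface z hz ⟨hF, hodd⟩

lemma IsSimpCycle.add_of_cons {k : ℕ} {X : Finset ℕ} {A B : Multiset (Finset ℕ)}
    (hA : IsSimpCycle k (X ::ₘ A)) (hB : IsSimpCycle k (X ::ₘ B)) : IsSimpCycle k (A + B) := by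
  refine ⟨fun U hU => ?_, fun F hF => ?_⟩
  · rcases Multiset.mem_add.1 hU with hU | hU
    exacts [hA.1 U (Multiset.mem_cons_of_mem hU), hB.1 U (Multiset.mem_cons_of_mem hU)]
  · have hsum := (hA.2 F hF).add (hB.2 F hF)
    simp only [simplexCount_cons] at hsum
    rw [simplexCount_add]
    rw [add_add_add_comm, ← two_mul] at hsum
    exact (Nat.even_add.1 hsum).2 (even_two_mul _)

lemma IsSimpCircuit.nodup {k : ℕ} {S : Multiset (Finset ℕ)} (hS : IsSimpCircuit k S)
    (hnt : ¬ IsTrivialSimpCircuit S) : S.Nodup := by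
  classical
  rw [Multiset.nodup_iff_count_le_one]
  by_contra! ⟨U, hU⟩
  have hle : {U, U} ≤ S := Multiset.le_count_iff_replicate_le.1 hU
  have hpair : IsSimpCycle k {U, U} := by
    refine ⟨hS.1.1.of_le hle, fun F _ => ?_⟩
    rw [Multiset.insert_eq_cons, simplexCount_cons, ← Multiset.cons_zero, simplexCount_cons,
      simplexCount_zero, zero_add]
    exact ⟨_, rfl⟩
  exact hS.2.2 _ hle Multiset.cons_ne_zero (fun h => hnt ⟨U, h.symm⟩) hpair

lemma IsSimpCycle.exists_ne_superset {k : ℕ} {S : Multiset (Finset ℕ)} (hS : IsSimpCycle k S)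
    (hnd : S.Nodup) {U F : Finset ℕ} (hU : U ∈ S) (hFU : F ⊆ U) (hF : F.card = k) :
    ∃ V ∈ S, F ⊆ V ∧ V ≠ U := by
  have hcount := hS.2 F hF
  rw [← Multiset.cons_erase hU, simplexCount_cons, if_pos hFU, Nat.even_add_one,
    Nat.not_even_iff_odd] at hcount
  obtain ⟨V, hV, hFV⟩ := exists_mem_superset_of_odd_simplexCount hcount
  obtain ⟨hVU, hV⟩ := hnd.mem_erase_iff.1 hV
  exact ⟨V, hV, hFV, hVU⟩

lemma IsSimpCycle.add_two_le_card_vertexSet {k : ℕ} {S : Multiset (Finset ℕ)}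
    (hS : IsSimpCycle k S) (hS0 : S ≠ 0) (hnd : S.Nodup) : k + 2 ≤ (vertexSet S).card := by
  obtain ⟨U, hU⟩ := Multiset.exists_mem_of_ne_zero hS0
  have hUc : U.card = k + 1 := hS.1 U hU
  obtain ⟨u, hu⟩ : U.Nonempty := Finset.card_pos.1 (by omega)
  obtain ⟨V, hV, hUV, hVU⟩ := hS.exists_ne_superset hnd hU (Finset.erase_subset u U)
    (by rw [Finset.card_erase_of_mem hu, hUc]; rfl)
  obtain ⟨v, hvV, hvU⟩ := Finset.not_subset.1 fun hVU' =>
    hVU (Finset.eq_of_subset_of_card_le hVU' (by rw [hS.1 V hV, hUc]))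
  calc k + 2 = (insert v U).card := by rw [Finset.card_insert_of_notMem hvU, hUc]
    _ ≤ (vertexSet S).card := Finset.card_le_card <| Finset.insert_subset
      (mem_vertexSet_of_mem hV hvV) fun x hx => mem_vertexSet_of_mem hU hx

/-- The trace, on the simplices, of a vertex set `K` separating `G(S)`. -/
structure IsSplitAlong (k : ℕ) (K : Finset ℕ) (S A B : Multiset (Finset ℕ)) : Prop where
  add_eq : A + B = S
  exists_left : ∃ U ∈ A, ¬ U ⊆ K
  exists_right : ∃ U ∈ B, ¬ U ⊆ K
  boundary_left : ∀ F ∈ boundarySet k A, F ⊆ K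
  boundary_right : ∀ F ∈ boundarySet k B, F ⊆ K

namespace IsSplitAlong

variable {k : ℕ} {K : Finset ℕ} {S A B : Multiset (Finset ℕ)}

lemma symm (h : IsSplitAlong k K S A B) : IsSplitAlong k K S B A :=
  ⟨(add_comm B A).trans h.add_eq, h.exists_right, h.exists_left, h.boundary_right,
    h.boundary_left⟩

lemma left_le (h : IsSplitAlong k K S A B) : A ≤ S :=
  h.add_eq ▸ Multiset.le_add_right A B

lemma left_ne_zero (h : IsSplitAlong k K S A B) : A ≠ 0 := by
  rintro rfl
  obtain ⟨U, hU, -⟩ := h.exists_left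
  exact Multiset.notMem_zero U hU

lemma left_ne (h : IsSplitAlong k K S A B) : A ≠ S := fun hAS =>
  h.symm.left_ne_zero (add_eq_left.1 (h.add_eq.trans hAS.symm))

end IsSplitAlong

namespace IsSimpCircuit

variable {k : ℕ} {S A B : Multiset (Finset ℕ)}

lemma not_isSimpCycle_of_isSplitAlong (hS : IsSimpCircuit k S) {K : Finset ℕ}
    (h : IsSplitAlong k K S A B) : ¬ IsSimpCycle k A :=
  hS.2.2 A h.left_le h.left_ne_zero h.left_ne

lemma lt_card_of_isSplitAlong (hS : IsSimpCircuit k S) (hk : 1 ≤ k) {K : Finset ℕ}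
    (h : IsSplitAlong k K S A B) : k < K.card := by
  by_contra! hK
  exact hS.not_isSimpCycle_of_isSplitAlong h <|
    isSimpCycle_of_boundarySet_subset_of_card_le hk (hS.1.1.of_le h.left_le) hK h.boundary_left

lemma isSimpCycle_cons_of_isSplitAlong (hS : IsSimpCircuit k S) {X : Finset ℕ}
    (hX : X.card = k + 1) (h : IsSplitAlong k X S A B) : IsSimpCycle k (X ::ₘ A) :=
  (isSimpCycle_or_isSimpCycle_cons (hS.1.1.of_le h.left_le) hX h.boundary_left).resolve_left
    (hS.not_isSimpCycle_of_isSplitAlong h)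

lemma notMem_right_of_isSplitAlong (hS : IsSimpCircuit k S) {X : Finset ℕ}
    (hX : X.card = k + 1) (h : IsSplitAlong k X S A B) : X ∉ B := by
  intro hXB
  have hle : X ::ₘ A ≤ S := by
    rw [← h.add_eq, ← Multiset.cons_erase hXB, Multiset.add_cons]
    exact Multiset.cons_le_cons X (Multiset.le_add_right A _)
  refine hS.2.2 _ hle Multiset.cons_ne_zero (fun hXA => ?_)
    (hS.isSimpCycle_cons_of_isSplitAlong hX h)
  obtain ⟨U, hU, hUX⟩ := h.exists_right
  rw [← h.add_eq, ← Multiset.singleton_add, add_comm, add_right_inj] at hXA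
  exact hUX (Multiset.mem_singleton.1 (hXA ▸ hU)).le

lemma notMem_of_isSplitAlong (hS : IsSimpCircuit k S) {X : Finset ℕ}
    (hX : X.card = k + 1) (h : IsSplitAlong k X S A B) : X ∉ S := by
  rw [← h.add_eq, Multiset.mem_add, not_or]
  exact ⟨hS.notMem_right_of_isSplitAlong hX h.symm, hS.notMem_right_of_isSplitAlong hX h⟩

lemma isSimpCircuit_cons_of_isSplitAlong (hS : IsSimpCircuit k S) {X : Finset ℕ}
    (hX : X.card = k + 1) (h : IsSplitAlong k X S A B) : IsSimpCircuit k (X ::ₘ A) := by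
  refine ⟨hS.isSimpCycle_cons_of_isSplitAlong hX h, Multiset.cons_ne_zero,
    fun T hT hT0 hTA hTcyc => ?_⟩
  by_cases hXT : X ∈ T
  · rw [← Multiset.cons_erase hXT] at hT hTA hTcyc
    rw [Multiset.cons_le_cons_iff] at hT
    refine hS.2.2 (T.erase X + B) (h.add_eq ▸ add_le_add_left hT B) ?_ ?_
      (hTcyc.add_of_cons (hS.isSimpCycle_cons_of_isSplitAlong hX h.symm))
    · exact fun h0 => h.symm.left_ne_zero (add_eq_zero.1 h0).2
    · rw [← h.add_eq, Ne, add_left_inj]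
      exact fun hTA' => hTA (congrArg (X ::ₘ ·) hTA')
  · rw [Multiset.le_cons_of_notMem hXT] at hT
    exact hS.2.2 T (hT.trans h.left_le) hT0 (fun hTS => h.left_ne <|
      le_antisymm h.left_le (hTS ▸ hT)) hTcyc

end IsSimpCircuit

lemma exists_mem_of_mem_vertexSet {S : Multiset (Finset ℕ)} {x : ℕ} (hx : x ∈ vertexSet S) :
    ∃ U ∈ S, x ∈ U := by
  simpa [vertexSet] using hx

lemma even_simplexCount_filter {S : Multiset (Finset ℕ)} {F : Finset ℕ}
    (hF : Even (simplexCount S F)) (p : Finset ℕ → Prop) [DecidablePred p] {q : Prop}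
    (hpq : ∀ U ∈ S, F ⊆ U → (p U ↔ q)) : Even (simplexCount (S.filter p) F) := by
  rw [simplexCount, Multiset.countP_filter]
  by_cases hq : q
  · rwa [Multiset.countP_congr rfl (p' := (F ⊆ ·)) fun U hU =>
      propext ⟨And.left, fun hFU => ⟨hFU, (hpq U hU hFU).2 hq⟩⟩]
  · rw [Multiset.countP_eq_zero.2 fun U hU hFU => hq ((hpq U hU hFU.1).1 hFU.2)]
    exact ⟨0, rfl⟩

lemma exists_isSplitAlong_of_not_connected {k : ℕ} {S : Multiset (Finset ℕ)}
    (hS : IsSimpCycle k S) {K : Finset ℕ} (hK : K.card < (vertexSet S).card)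
    (hdisc : ¬ ((graphOf S).deleteVerts K).Connected) : ∃ A B, IsSplitAlong k K S A B := by
  classical
  have hne : (vertexSet S \ K).Nonempty :=
    Finset.sdiff_nonempty.2 fun hVK => (Finset.card_le_card hVK).not_gt hK
  unfold FinGraph.Connected at hdisc
  push Not at hdisc
  obtain ⟨x, hx, y, hy, hxy⟩ := hdisc hne
  set C : ℕ → Prop := Relation.ReflTransGen ((graphOf S).deleteVerts K).Adj x
  have hC : ∀ U ∈ S, ∀ v ∈ U, ∀ w ∈ U, v ∉ K → w ∉ K → C v → C w := by
    intro U hU v hv w hw hvK hwK hCv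
    rcases eq_or_ne v w with rfl | hvw
    · exact hCv
    · exact hCv.tail ⟨⟨hvw, U, hU, hv, hw⟩, hvK, hwK⟩
  set p : Finset ℕ → Prop := fun U => ∃ v ∈ U, v ∉ K ∧ C v
  have hp : ∀ U ∈ S, ∀ v ∈ U, v ∉ K → (p U ↔ C v) := fun U hU v hv hvK =>
    ⟨fun ⟨w, hw, hwK, hCw⟩ => hC U hU w hw v hv hwK hvK hCw,
      fun hCv => ⟨v, hv, hvK, hCv⟩⟩
  have hbd : ∀ (r : Finset ℕ → Prop) [DecidablePred r] (c : ℕ → Prop),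
      (∀ U ∈ S, ∀ v ∈ U, v ∉ K → (r U ↔ c v)) →
        ∀ F ∈ boundarySet k (S.filter r), F ⊆ K := by
    intro r _ c hr F hF
    by_contra hFK
    obtain ⟨v, hvF, hvK⟩ := Finset.not_subset.1 hFK
    exact Nat.not_even_iff_odd.2 hF.2 <| even_simplexCount_filter (hS.2 F hF.1) r
      fun U hU hFU => hr U hU v (hFU hvF) hvK
  obtain ⟨hxV, hxK⟩ := Finset.mem_sdiff.1 hx
  obtain ⟨hyV, hyK⟩ := Finset.mem_sdiff.1 hy
  obtain ⟨U, hU, hxU⟩ := exists_mem_of_mem_vertexSet hxV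
  obtain ⟨W, hW, hyW⟩ := exists_mem_of_mem_vertexSet hyV
  refine ⟨S.filter p, S.filter (¬ p ·), ⟨Multiset.filter_add_not p S,
    ⟨U, Multiset.mem_filter.2 ⟨hU, x, hxU, hxK, .refl⟩, fun hUK => hxK (hUK hxU)⟩,
    ⟨W, Multiset.mem_filter.2 ⟨hW, fun hpW => hxy ((hp W hW y hyW hyK).1 hpW)⟩,
      fun hWK => hyK (hWK hyW)⟩, hbd p C hp,
    hbd (¬ p ·) (¬ C ·) fun U hU v hv hvK => not_congr (hp U hU v hv hvK)⟩⟩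

lemma IsSimpCycle.exists_superset_erase_of_cons {k : ℕ} {X : Finset ℕ}
    {A : Multiset (Finset ℕ)} (h : IsSimpCycle k (X ::ₘ A)) {z : ℕ} (hz : z ∈ X) :
    ∃ U ∈ A, X.erase z ⊆ U := by
  have hcount := h.2 (X.erase z)
    (by rw [Finset.card_erase_of_mem hz, h.1 X (Multiset.mem_cons_self X A)]; rfl)
  rw [simplexCount_cons, if_pos (Finset.erase_subset z X), Nat.even_add_one,
    Nat.not_even_iff_odd] at hcount
  exact exists_mem_superset_of_odd_simplexCount hcount

lemma isClique_graphOf {S : Multiset (Finset ℕ)} {X : Finset ℕ} (hXV : X ⊆ vertexSet S)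
    (hX : 3 ≤ X.card) (hfaces : ∀ z ∈ X, ∃ U ∈ S, X.erase z ⊆ U) :
    (graphOf S).IsClique X := by
  refine ⟨hXV, fun x hx y hy hxy => ?_⟩
  obtain ⟨z, hz⟩ : ((X.erase x).erase y).Nonempty := by
    rw [← Finset.card_pos, Finset.card_erase_of_mem (Finset.mem_erase.2 ⟨hxy.symm, hy⟩),
      Finset.card_erase_of_mem hx]
    omega
  obtain ⟨hzy, hz⟩ := Finset.mem_erase.1 hz
  obtain ⟨hzx, hzX⟩ := Finset.mem_erase.1 hz
  obtain ⟨U, hU, hXU⟩ := hfaces z hzX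
  exact ⟨hxy, U, hU, hXU (Finset.mem_erase.2 ⟨Ne.symm hzx, hx⟩),
    hXU (Finset.mem_erase.2 ⟨Ne.symm hzy, hy⟩)⟩

lemma Multiset.cons_inter_cons_eq_singleton {α : Type*} [DecidableEq α] {a : α}
    {s t : Multiset α} (h : Disjoint s t) : (a ::ₘ s) ∩ (a ::ₘ t) = {a} := by
  rw [← Multiset.cons_inter_distrib, Multiset.inter_eq_zero_iff_disjoint.2 h]
  rfl

lemma symmDiffM_cons_cons {X : Finset ℕ} {A B : Multiset (Finset ℕ)} (h : Disjoint A B) :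
    symmDiffM (X ::ₘ A) (X ::ₘ B) = A + B := by
  have hsub : ∀ {s t : Multiset (Finset ℕ)}, Disjoint s t →
      (X ::ₘ s) - (X ::ₘ t) = s := by
    intro s t hst
    rw [Multiset.sub_cons, Multiset.erase_cons_head]
    simpa [Multiset.inter_eq_zero_iff_disjoint.2 hst] using Multiset.sub_add_inter s t
  rw [symmDiffM, hsub h, hsub h.symm]

theorem connectivity_and_separators_of_circuit (k : ℕ) (hk : 2 ≤ k)
    (S : Multiset (Finset ℕ)) (hS : IsSimpCircuit k S)
    (hnt : ¬ IsTrivialSimpCircuit S) :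
    (graphOf S).ConnectedGE (k + 1) ∧
      ∀ X : Finset ℕ, X ⊆ vertexSet S → X.card = k + 1 →
        ¬ ((graphOf S).deleteVerts X).Connected →
          (graphOf S).IsClique X ∧ X ∉ S ∧
            ∃ S' S'' : Multiset (Finset ℕ), IsSimpCircuit k S' ∧ IsSimpCircuit k S'' ∧
              S' ∩ S'' = {X} ∧ S = symmDiffM S' S'' := by
  have hnd := hS.nodup hnt
  have hV : k + 2 ≤ (vertexSet S).card := hS.1.add_two_le_card_vertexSet hS.2.1 hnd
  refine ⟨⟨hV, fun K hK => ?_⟩, fun X hXV hX hdisc => ?_⟩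
  · by_contra hdisc
    obtain ⟨A, B, h⟩ := exists_isSplitAlong_of_not_connected hS.1 (by omega) hdisc
    exact (hS.lt_card_of_isSplitAlong (by omega) h).not_ge (by omega)
  obtain ⟨A, B, h⟩ := exists_isSplitAlong_of_not_connected hS.1 (by omega) hdisc
  have hdisj : Disjoint A B := (Multiset.nodup_add.1 (h.add_eq ▸ hnd)).2.2
  refine ⟨isClique_graphOf hXV (by omega) fun z hz => ?_, hS.notMem_of_isSplitAlong hX h,
    X ::ₘ A, X ::ₘ B, hS.isSimpCircuit_cons_of_isSplitAlong hX h,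
    hS.isSimpCircuit_cons_of_isSplitAlong hX h.symm,
    Multiset.cons_inter_cons_eq_singleton hdisj,
    ((symmDiffM_cons_cons hdisj).trans h.add_eq).symm⟩
  obtain ⟨U, hU, hXU⟩ :=
    (hS.isSimpCycle_cons_of_isSplitAlong hX h).exists_superset_erase_of_cons hz
  exact ⟨U, Multiset.mem_of_le h.left_le hU, hXU⟩
end

section
/- Let k ≥ 1, let S be a simplicial k-cycle, and let u, v be distinct vertices of S. Then the contraction S/uv is a simplicial k-cycle. -/
/-! For a `k`-set `F`: if `v ∈ F`, no simplex of `S/uv` contains `F`, since `v` is no longer a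
vertex. If `u, v ∉ F`, the simplices of `S/uv` containing `F` are the images of those of `S`
containing `F`, because a `(k+1)`-simplex cannot contain `F`, `u` and `v`. If `u ∈ F` and `v ∉ F`,
put `F' = (F ∖ {u}) ∪ {v}`; simplex by simplex, the contribution to the count of `F` in `S/uv` is
congruent mod 2 to the sum of the contributions to the counts of `F` and `F'` in `S`. -/

theorem Multiset.cast_countP_eq_sum_map {α R : Type*} [AddCommMonoidWithOne R] (p : α → Prop)
    [DecidablePred p] (S : Multiset α) :
    (S.countP p : R) = (S.map fun a => if p a then (1 : R) else 0).sum := by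
  induction S using Multiset.induction_on with
  | empty => simp
  | cons a S ih => by_cases h : p a <;> simp [h, ih, add_comm]

def contractSimplex (u v : ℕ) (U : Finset ℕ) : Finset ℕ :=
  if v ∈ U then insert u (U.erase v) else U

lemma contractS_eq_map_contractSimplex (S : Multiset (Finset ℕ)) (u v : ℕ) :
    contractS S u v = (S.filter fun U => ¬ (u ∈ U ∧ v ∈ U)).map (contractSimplex u v) :=
  rfl

lemma notMem_contractSimplex {u v : ℕ} (hne : u ≠ v) (U : Finset ℕ) :
    v ∉ contractSimplex u v U := by
  unfold contractSimplex
  split_ifs with hvU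
  · simp [hne.symm]
  · exact hvU

lemma card_contractSimplex {u v : ℕ} {U : Finset ℕ} (h : ¬ (u ∈ U ∧ v ∈ U)) :
    (contractSimplex u v U).card = U.card := by
  unfold contractSimplex
  split_ifs with hvU
  · have huU : u ∉ U.erase v := fun hu => h ⟨Finset.mem_of_mem_erase hu, hvU⟩
    rw [Finset.card_insert_of_notMem huU, Finset.card_erase_add_one hvU]
  · rfl

lemma IsMultiComplex.contractS {k : ℕ} {S : Multiset (Finset ℕ)} (hS : IsMultiComplex k S)
    (u v : ℕ) : IsMultiComplex k (contractS S u v) := by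
  intro W hW
  rw [contractS_eq_map_contractSimplex] at hW
  obtain ⟨U, hU, rfl⟩ := Multiset.mem_map.1 hW
  obtain ⟨hUS, hUuv⟩ := Multiset.mem_filter.1 hU
  rw [card_contractSimplex hUuv, hS U hUS]

lemma simplexCount_contractS (S : Multiset (Finset ℕ)) (u v : ℕ) (F : Finset ℕ) :
    simplexCount (contractS S u v) F =
      S.countP fun U => F ⊆ contractSimplex u v U ∧ ¬ (u ∈ U ∧ v ∈ U) := by
  rw [simplexCount, contractS_eq_map_contractSimplex, Multiset.countP_map,
    ← Multiset.countP_eq_card_filter, Multiset.countP_filter]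

lemma simplexCount_contractS_of_mem {S : Multiset (Finset ℕ)} {u v : ℕ} (hne : u ≠ v)
    {F : Finset ℕ} (hvF : v ∈ F) : simplexCount (contractS S u v) F = 0 := by
  rw [simplexCount_contractS, Multiset.countP_eq_zero]
  exact fun U _ hU => notMem_contractSimplex hne U (hU.1 hvF)

lemma subset_contractSimplex_iff_of_notMem {u v : ℕ} {F : Finset ℕ} (huF : u ∉ F) (hvF : v ∉ F)
    (U : Finset ℕ) : F ⊆ contractSimplex u v U ↔ F ⊆ U := by
  unfold contractSimplex
  split_ifs
  · rw [Finset.subset_insert_iff_of_notMem huF, Finset.subset_erase, and_iff_left hvF]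
  · rfl

lemma simplexCount_contractS_of_notMem {k : ℕ} {S : Multiset (Finset ℕ)}
    (hS : IsMultiComplex k S) {u v : ℕ} (hne : u ≠ v) {F : Finset ℕ} (hF : F.card = k)
    (huF : u ∉ F) (hvF : v ∉ F) : simplexCount (contractS S u v) F = simplexCount S F := by
  rw [simplexCount_contractS, simplexCount]
  refine Multiset.countP_congr rfl fun U hU => propext ?_
  rw [subset_contractSimplex_iff_of_notMem huF hvF, and_iff_left_iff_imp]
  rintro hFU ⟨huU, hvU⟩
  have hcard : (insert u (insert v F)).card = k + 2 := by
    rw [Finset.card_insert_of_notMem (by simp [hne, huF]), Finset.card_insert_of_notMem hvF, hF]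
  have := Finset.card_le_card (Finset.insert_subset huU (Finset.insert_subset hvU hFU))
  rw [hcard, hS U hU] at this
  omega

lemma subset_contractSimplex_iff_of_mem {u v : ℕ} {F U : Finset ℕ} (hvF : v ∉ F) (hvU : v ∈ U) :
    F ⊆ contractSimplex u v U ↔ F.erase u ⊆ U := by
  rw [contractSimplex, if_pos hvU, Finset.subset_insert_iff, Finset.subset_erase,
    and_iff_left fun h => hvF (Finset.mem_of_mem_erase h)]

lemma ite_subset_contractSimplex_eq_add {u v : ℕ} {F : Finset ℕ} (huF : u ∈ F) (hvF : v ∉ F)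
    (U : Finset ℕ) :
    (if F ⊆ contractSimplex u v U ∧ ¬ (u ∈ U ∧ v ∈ U) then 1 else 0 : ZMod 2) =
      (if F ⊆ U then 1 else 0) + (if insert v (F.erase u) ⊆ U then 1 else 0) := by
  by_cases hvU : v ∈ U
  · by_cases huU : u ∈ U
    · have hFU : F ⊆ U ↔ F.erase u ⊆ U := (Finset.erase_subset_iff_of_mem huU).symm
      have hF'U : insert v (F.erase u) ⊆ U ↔ F.erase u ⊆ U := by
        rw [Finset.insert_subset_iff, and_iff_right hvU]
      simp only [hFU, hF'U, huU, hvU, and_self, not_true_eq_false, and_false, if_false,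
        CharTwo.add_self_eq_zero]
    · have hFU : ¬ F ⊆ U := fun h => huU (h huF)
      simp [subset_contractSimplex_iff_of_mem hvF hvU, Finset.insert_subset_iff, huU, hvU, hFU]
  · have hF'U : ¬ insert v (F.erase u) ⊆ U := fun h => hvU (h (Finset.mem_insert_self _ _))
    simp [contractSimplex, hvU, hF'U]

lemma cast_simplexCount_contractS {S : Multiset (Finset ℕ)} {u v : ℕ} {F : Finset ℕ}
    (huF : u ∈ F) (hvF : v ∉ F) :
    (simplexCount (contractS S u v) F : ZMod 2) =
      simplexCount S F + simplexCount S (insert v (F.erase u)) := by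
  rw [simplexCount_contractS]
  simp only [simplexCount, Multiset.cast_countP_eq_sum_map, ← Multiset.sum_map_add]
  exact congrArg _ (Multiset.map_congr rfl fun U _ => ite_subset_contractSimplex_eq_add huF hvF U)

theorem contraction_of_cycle_general (k : ℕ)
    (S : Multiset (Finset ℕ)) (hS : IsSimpCycle k S)
    (u v : ℕ) (hne : u ≠ v) :
    IsSimpCycle k (contractS S u v) := by
  obtain ⟨hcomplex, heven⟩ := hS
  refine ⟨hcomplex.contractS u v, fun F hF => ?_⟩
  by_cases hvF : v ∈ F
  · rw [simplexCount_contractS_of_mem hne hvF]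
    exact Even.zero
  by_cases huF : u ∈ F
  · have hF' : (insert v (F.erase u)).card = k := by
      rw [Finset.card_insert_of_notMem fun h => hvF (Finset.mem_of_mem_erase h),
        Finset.card_erase_add_one huF, hF]
    rw [← ZMod.natCast_eq_zero_iff_even, cast_simplexCount_contractS huF hvF,
      ZMod.natCast_eq_zero_iff_even.2 (heven F hF),
      ZMod.natCast_eq_zero_iff_even.2 (heven _ hF'), add_zero]
  · rw [simplexCount_contractS_of_notMem hcomplex hne hF huF hvF]
    exact heven F hF

theorem contraction_of_cycle (k : ℕ) (hk : 1 ≤ k)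
    (S : Multiset (Finset ℕ)) (hS : IsSimpCycle k S)
    (u v : ℕ) (hu : u ∈ vertexSet S) (hv : v ∈ vertexSet S) (hne : u ≠ v) :
    IsSimpCycle k (contractS S u v) :=
  contraction_of_cycle_general k S hS u v hne
end
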